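/- In the ADMM with AL cuts, for indices 0 ≤ i < j, if t^j ≥ P(z^i, μ^{i+1}, β^{i+1}) + ⟨μ^{i+1}, Bz^j − Bz^i⟩ − β^{i+1}‖Bz^j − Bz^i‖₁, P(z^i, μ^{i+1}, β^{i+1}) ≥ R_ρ̲(z^i), ‖μ^{i+1}‖_∞ + β^{i+1} ≤ ρ̄, and R_ρ̲ is ρ̲‖B‖₁-Lipschitz in the ℓ1-norm, then R_ρ̲(z^j) − t^j ≤ (ρ̲ + ρ̄)‖B‖₁‖z^j − z^i‖₁. -/
import Mathlib


open Matrix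

noncomputable def l1 {m : ℕ} (v : Fin m → ℝ) : ℝ := ∑ i, |v i|
noncomputable def linf {m : ℕ} (v : Fin m → ℝ) : ℝ := ⨆ i, |v i|

lemma l1_nonneg {m : ℕ} (v : Fin m → ℝ) : 0 ≤ l1 v :=
  Finset.sum_nonneg fun i _ => abs_nonneg _

lemma abs_le_linf {m : ℕ} (v : Fin m → ℝ) (i : Fin m) : |v i| ≤ linf v := by
  rw [linf]; exact le_ciSup (Set.Finite.bddAbove (Set.finite_range fun j => |v j|)) i

lemma holder {m : ℕ} (μ v : Fin m → ℝ) : |μ ⬝ᵥ v| ≤ linf μ * l1 v := by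
  calc |μ ⬝ᵥ v| ≤ ∑ i, |μ i * v i| := Finset.abs_sum_le_sum_abs _ _
    _ ≤ ∑ i, linf μ * |v i| := by
        refine Finset.sum_le_sum fun i _ => ?_
        rw [abs_mul]
        exact mul_le_mul_of_nonneg_right (abs_le_linf μ i) (abs_nonneg _)
    _ = linf μ * l1 v := by rw [l1, Finset.mul_sum]

/-- Key inequality in the ADMM complexity analysis: if the AL-cut value `t^j`
dominates the cut generated at `z^i`, the cut value `P(z^i, μ^{i+1}, β^{i+1})`
dominates `R_ρ̲(z^i)`, `‖μ^{i+1}‖_∞ + β^{i+1} ≤ ρ̄`, and `R_ρ̲` is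
`ρ̲‖B‖₁`-Lipschitz (ℓ1), then `R_ρ̲(z^j) − t^j ≤ (ρ̲ + ρ̄)‖B‖₁‖z^j − z^i‖₁`. -/
theorem stmt_17 (m d : ℕ) (B : Matrix (Fin m) (Fin d) ℝ)
    (KB : ℝ) (hKB0 : 0 ≤ KB)
    (hKB : ∀ v : Fin d → ℝ, l1 (B *ᵥ v) ≤ KB * l1 v)
    (ρlow ρup : ℝ) (hρlow : 0 < ρlow) (hρup : 0 < ρup)
    (R : (Fin d → ℝ) → ℝ)
    (hLip : ∀ z₁ z₂ : Fin d → ℝ, |R z₁ - R z₂| ≤ ρlow * KB * l1 (z₁ - z₂))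
    (zi zj : Fin d → ℝ) (μ : Fin m → ℝ) (β : ℝ) (hβ : 0 ≤ β)
    (hΛ : linf μ + β ≤ ρup)
    (Pval tj : ℝ)
    (hcut : tj ≥ Pval + μ ⬝ᵥ (B *ᵥ zj - B *ᵥ zi) - β * l1 (B *ᵥ zj - B *ᵥ zi))
    (hPR : Pval ≥ R zi) :
    R zj - tj ≤ (ρlow + ρup) * KB * l1 (zj - zi) := by
  set v := B *ᵥ zj - B *ᵥ zi with hv
  have hvB : v = B *ᵥ (zj - zi) := by rw [hv, Matrix.mulVec_sub]
  have h1 : R zj - R zi ≤ ρlow * KB * l1 (zj - zi) :=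
    (abs_le.mp (hLip zj zi)).2.trans_eq' rfl
  have hμ0 : 0 ≤ linf μ := Real.iSup_nonneg fun i => abs_nonneg _
  have hH : |μ ⬝ᵥ v| ≤ linf μ * l1 v := holder μ v
  have hl1v : 0 ≤ l1 v := l1_nonneg v
  have hvle : l1 v ≤ KB * l1 (zj - zi) := by rw [hvB]; exact hKB _
  have habs := abs_le.mp hH
  have h2 : R zi - tj ≤ (linf μ + β) * l1 v := by nlinarith [habs.1]
  have h3 : (linf μ + β) * l1 v ≤ ρup * (KB * l1 (zj - zi)) := by
    have : (linf μ + β) * l1 v ≤ ρup * l1 v :=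
      mul_le_mul_of_nonneg_right hΛ hl1v
    nlinarith
  nlinarith
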